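/- arXiv:0911.2048 — 3 statements merged into one kernel-verified Lean document; each statement's English description precedes it below -/
import Mathlib

section
/- Let G be a finite group of order n and for each positive integer l let R_l(G) denote the number of solutions x ∈ G of x^l = 1. If positive integers s, l₁, l₂, …, l_s satisfy R_{l₁}(G)·R_{l₂}(G)⋯R_{l_s}(G) > n^{s−1}, then G is not k-round for any integer k ≥ 1 of the form k = c₁ l₁ + c₂ l₂ + ⋯ + c_s l_s with nonnegative integers c₁, …, c_s. -/
/-- A cycle of length `n = Nat.card G` over `G` is a function `ZMod n → G`.
It is `k`-round if for all integers `m₁, …, m_k`, the map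
`i ↦ g (i+m₁) * g (i+m₂) * ⋯ * g (i+m_k)` is a bijection from `ZMod n` to `G`. -/
def IsRoundCycle (G : Type*) [Group G] (k : ℕ) (g : ZMod (Nat.card G) → G) : Prop :=
  ∀ m : Fin k → ℤ,
    Function.Bijective fun i : ZMod (Nat.card G) =>
      (List.ofFn fun j : Fin k => g (i + (m j : ZMod (Nat.card G)))).prod

/-- `G` is `k`-round if it admits a `k`-round cycle. -/
def IsKRound (G : Type*) [Group G] (k : ℕ) : Prop :=
  ∃ g : ZMod (Nat.card G) → G, IsRoundCycle G k g

/-- A cycle is totally round if it is `k`-round for every `k ≥ 1` with `gcd(k, n) = 1`. -/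
def IsTotallyRoundCycle (G : Type*) [Group G] (g : ZMod (Nat.card G) → G) : Prop :=
  ∀ k : ℕ, 1 ≤ k → Nat.gcd k (Nat.card G) = 1 → IsRoundCycle G k g

/-- `G` is round if it admits a totally round cycle. -/
def IsRound (G : Type*) [Group G] : Prop :=
  ∃ g : ZMod (Nat.card G) → G, IsTotallyRoundCycle G g

/-!
If `g` is a `k`-round cycle and `k = e₁ + ⋯ + e_s`, then for every shift vector `a ∈ (ℤ/n)^s`
the map `i ↦ ∏ₜ g(i + aₜ)^{eₜ}` is a bijection (take each shift `aₜ` exactly `eₜ` times).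
So every `a` has exactly one translate `i + a` in `T = {a | ∏ₜ g(aₜ)^{eₜ} = 1}`, and double
counting gives `|T| · n = n^s`. For `eₜ = cₜ lₜ`, `T` contains all `a` with `g(aₜ)^{lₜ} = 1`
for every `t`; since `g` is a bijection (take all shifts `0`), these number `∏ₜ R_{lₜ}(G)`,
whence `∏ₜ R_{lₜ}(G) ≤ n^{s-1}`.
-/

open Function

theorem Nat.card_subtype_mul_card_eq_of_existsUnique_vadd {A X : Type*} [AddGroup A]
    [AddAction A X] (P : X → Prop) (hP : ∀ x, ∃! a : A, P (a +ᵥ x)) :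
    Nat.card {x // P x} * Nat.card A = Nat.card X := by
  let pairs := {p : X × A // P (p.2 +ᵥ p.1)}
  have hfst : Bijective fun p : pairs => p.1.1 := by
    refine ⟨fun p q hpq => ?_, fun x => ?_⟩
    · have hx : p.1.1 = q.1.1 := hpq
      exact Subtype.ext (Prod.ext hx ((hP _).unique p.2 (hx ▸ q.2)))
    · obtain ⟨a, ha, -⟩ := hP x
      exact ⟨⟨(x, a), ha⟩, rfl⟩
  let shear : X × A ≃ X × A :=
    { toFun := fun p => (p.2 +ᵥ p.1, p.2)
      invFun := fun p => (-p.2 +ᵥ p.1, p.2)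
      left_inv := fun p => by simp
      right_inv := fun p => by simp }
  calc Nat.card {x // P x} * Nat.card A
      = Nat.card pairs := by
        rw [← Nat.card_prod, Nat.card_congr ((shear.subtypeEquiv fun _ => Iff.rfl).trans
          Equiv.prodSubtypeFstEquivSubtypeProd).symm]
        rfl
    _ = Nat.card X := Nat.card_congr (Equiv.ofBijective _ hfst)

theorem Function.Bijective.prod_card_pow_eq_one_le {G X : Type*} [Group G] [Finite X]
    {g : X → G} (hg : Bijective g) {s : ℕ} (c l : Fin s → ℕ) :
    ∏ t, Nat.card {x : G // x ^ l t = 1} ≤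
      Nat.card {a : Fin s → X // (List.ofFn fun t => g (a t) ^ (c t * l t)).prod = 1} := by
  let e := Equiv.ofBijective g hg
  calc ∏ t, Nat.card {x : G // x ^ l t = 1}
      = Nat.card {a : Fin s → X // ∀ t, g (a t) ^ l t = 1} := by
        rw [Nat.card_congr (Equiv.subtypePiEquivPi (p := fun t x => g x ^ l t = 1)), Nat.card_pi]
        exact Finset.prod_congr rfl fun t _ =>
          (Nat.card_congr (e.subtypeEquiv fun _ => Iff.rfl)).symm
    _ ≤ _ := by
      refine Nat.card_le_card_of_injective (fun a => ⟨a.1, List.prod_eq_one ?_⟩) ?_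
      · simp [pow_mul', a.2]
      · exact fun a b hab => Subtype.ext (congrArg (fun x => x.1) hab)

namespace IsRoundCycle

variable {G : Type*} [Group G] {k : ℕ} {g : ZMod (Nat.card G) → G}

theorem injective (hg : IsRoundCycle G k g) : Injective g := by
  have hpow : Bijective fun i => g i ^ k := by
    simpa [List.ofFn_const, List.prod_replicate] using hg fun _ => 0
  exact Injective.of_comp (f := (· ^ k)) hpow.injective

theorem bijective [Finite G] (hg : IsRoundCycle G k g) : Bijective g :=
  hg.injective.bijective_of_nat_card_le (by rw [Nat.card_zmod])

theorem bijective_prod_map (hg : IsRoundCycle G k g) (L : List (ZMod (Nat.card G)))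
    (hL : L.length = k) : Bijective fun i => (L.map fun z => g (i + z)).prod := by
  subst hL
  convert hg fun j => (L[j] : ZMod (Nat.card G)).cast using 3 with i
  rw [← List.ofFn_getElem_eq_map]
  simp only [ZMod.intCast_zmod_cast, Fin.getElem_fin]

theorem bijective_prod_pow (hg : IsRoundCycle G k g) {s : ℕ} (e : Fin s → ℕ)
    (he : ∑ t, e t = k) (a : Fin s → ZMod (Nat.card G)) :
    Bijective fun i => (List.ofFn fun t => g (i + a t) ^ e t).prod := by
  let L := (List.finRange s).flatMap fun t => List.replicate (e t) (a t)
  have hL : L.length = k := by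
    simp [L, List.length_flatMap, ← he, Fin.sum_univ_def]
  convert hg.bijective_prod_map L hL using 2 with i
  simp [L, List.flatMap, List.prod_flatten, List.ofFn_eq_map, comp_def, List.prod_replicate]

theorem card_prod_pow_eq_one_mul_card (hg : IsRoundCycle G k g) {s : ℕ} (e : Fin s → ℕ)
    (he : ∑ t, e t = k) :
    Nat.card {a : Fin s → ZMod (Nat.card G) // (List.ofFn fun t => g (a t) ^ e t).prod = 1} *
      Nat.card G = Nat.card G ^ s := by
  simpa [Nat.card_fun, Nat.card_zmod] using
    Nat.card_subtype_mul_card_eq_of_existsUnique_vadd (A := ZMod (Nat.card G))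
      (fun a : Fin s → ZMod (Nat.card G) => (List.ofFn fun t => g (a t) ^ e t).prod = 1)
      fun a => (hg.bijective_prod_pow e he a).existsUnique 1

end IsRoundCycle

theorem statement11_general (G : Type*) [Group G] [Finite G] (s : ℕ)
    (l : Fin s → ℕ)
    (h : Nat.card G ^ (s - 1) < ∏ i : Fin s, Nat.card {x : G // x ^ (l i) = 1}) :
    ∀ k : ℕ, 1 ≤ k → (∃ c : Fin s → ℕ, k = ∑ i : Fin s, c i * l i) →
      ¬ IsKRound G k := by
  rintro k - ⟨c, rfl⟩ ⟨g, hg⟩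
  have hcount := hg.card_prod_pow_eq_one_mul_card (fun t => c t * l t) rfl
  have hlower := hg.bijective.prod_card_pow_eq_one_le c l
  have hn : 0 < Nat.card G := Nat.card_pos
  refine (Nat.mul_lt_mul_of_pos_right h hn).not_ge ?_
  calc (∏ t, Nat.card {x : G // x ^ l t = 1}) * Nat.card G
      ≤ _ := Nat.mul_le_mul_right _ hlower
    _ = Nat.card G ^ s := hcount
    _ ≤ Nat.card G ^ (s - 1) * Nat.card G := by
      rw [← pow_succ]
      exact Nat.pow_le_pow_right hn (by omega)

/-- Let `G` be a finite group of order `n`, and for `l ≥ 1` let `R_l(G)` be the number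
of solutions of `x^l = 1` in `G`. If `R_{l₁}(G) ⋯ R_{l_s}(G) > n^{s-1}` for positive
integers `s, l₁, …, l_s`, then `G` is not `k`-round for any `k ≥ 1` of the form
`k = c₁ l₁ + ⋯ + c_s l_s` with nonnegative integers `c_i`. -/
theorem statement11 (G : Type*) [Group G] [Finite G] (s : ℕ) (hs : 1 ≤ s)
    (l : Fin s → ℕ) (hl : ∀ i, 1 ≤ l i)
    (h : Nat.card G ^ (s - 1) < ∏ i : Fin s, Nat.card {x : G // x ^ (l i) = 1}) :
    ∀ k : ℕ, 1 ≤ k → (∃ c : Fin s → ℕ, k = ∑ i : Fin s, c i * l i) →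
      ¬ IsKRound G k :=
  statement11_general G s l h
end

section
/- Let l ≥ 1 be an integer divisible by 3 and let D_l be the dihedral group of order 2l. Then D_l is unround: it is not k-round for any integer k ≥ 2. -/
/-!
A `k`-round cycle `g` on `D_l` makes every word map `i ↦ g(i+m₁)⋯g(i+m_k)` a bijection, so for
any subset `S` of `D_l` the set of `i` whose word lands in `S` has exactly `|S|` elements, whatever
the shifts. Take `S` the kernel of the reduction `D_l → D_3` and, with `k = c + 3` and `d` fixed,
the two words `x^c · x y y` and `x^c · y x y` in `x = g i`, `y = g (i + d)`. Taking all shifts `0`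
shows that `r 1` and `sr 0` are `k`-th powers, which forces `k ≡ ±1 (mod 6)`; for such `k` a finite
check in `D_3` shows that one of the two conditions "word ∈ S" implies the other, strictly so at
the index `i` with `g i ^ k = r 1` and `g (i + d) ^ k = sr 0`. This contradicts the equality of
the counts.
-/

open DihedralGroup

section Words

variable {M N : Type*} [Monoid M] [Monoid N]

def wordXYY (c : ℕ) (x y : M) : M := x ^ c * (x * (y * y))

def wordYXY (c : ℕ) (x y : M) : M := x ^ c * (y * (x * y))

@[simp] lemma map_wordXYY (f : M →* N) (c : ℕ) (x y : M) :
    f (wordXYY c x y) = wordXYY c (f x) (f y) := by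
  simp [wordXYY]

@[simp] lemma map_wordYXY (f : M →* N) (c : ℕ) (x y : M) :
    f (wordYXY c x y) = wordYXY c (f x) (f y) := by
  simp [wordYXY]

end Words

lemma Function.Bijective.preimage_eq_of_preimage_subset {α β : Type*} [Finite β] {f f' : α → β}
    (hf : f.Bijective) (hf' : f'.Bijective) {s : Set β} (h : f ⁻¹' s ⊆ f' ⁻¹' s) :
    f ⁻¹' s = f' ⁻¹' s := by
  have : Finite α := Finite.of_injective f hf.1
  refine Set.eq_of_subset_of_ncard_le h ?_
  rw [Set.ncard_preimage_of_injective_subset_range hf.1 (by simp [hf.2.range_eq]),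
    Set.ncard_preimage_of_injective_subset_range hf'.1 (by simp [hf'.2.range_eq])]

namespace IsRoundCycle

variable {G : Type*} [Group G] {g : ZMod (Nat.card G) → G}

lemma bijective_pow {k : ℕ} (hg : IsRoundCycle G k g) : Function.Bijective fun i => g i ^ k := by
  simpa only [Int.cast_zero, add_zero, List.ofFn_const, List.prod_replicate] using hg fun _ => 0

lemma bijective_pow_mul_mul_mul {c : ℕ} (hg : IsRoundCycle G (c + 3) g)
    (a b e : ZMod (Nat.card G)) :
    Function.Bijective fun i => g i ^ c * (g (i + a) * (g (i + b) * g (i + e))) := by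
  convert hg (Fin.append (fun _ : Fin c => 0) ![a.cast, b.cast, e.cast]) using 2 with i
  rw [List.ofFn_add, List.prod_append]
  simp [Fin.append_right, List.ofFn_succ]

lemma bijective_wordXYY {c : ℕ} (hg : IsRoundCycle G (c + 3) g) (d : ZMod (Nat.card G)) :
    Function.Bijective fun i => wordXYY c (g i) (g (i + d)) := by
  simpa only [wordXYY, add_zero] using hg.bijective_pow_mul_mul_mul 0 d d

lemma bijective_wordYXY {c : ℕ} (hg : IsRoundCycle G (c + 3) g) (d : ZMod (Nat.card G)) :
    Function.Bijective fun i => wordYXY c (g i) (g (i + d)) := by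
  simpa only [wordYXY, add_zero] using hg.bijective_pow_mul_mul_mul d 0 d

end IsRoundCycle

namespace DihedralGroup

lemma sq_ne_sr {n : ℕ} (x : DihedralGroup n) (i : ZMod n) : x ^ 2 ≠ sr i := by
  rcases x with j | j <;> simp only [sq, r_mul_r, sr_mul_sr] <;> nofun

def castHom {m n : ℕ} (h : m ∣ n) : DihedralGroup n →* DihedralGroup m where
  toFun
    | r a => r a.cast
    | sr a => sr a.cast
  map_one' := congrArg r ZMod.cast_zero
  map_mul' := by
    rintro (a | a) (b | b) <;>
      simp [r_mul_r, r_mul_sr, sr_mul_r, sr_mul_sr, ZMod.cast_add h, ZMod.cast_sub h]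

@[simp] lemma castHom_r {m n : ℕ} (h : m ∣ n) (a : ZMod n) :
    castHom h (r a) = r a.cast := rfl

@[simp] lemma castHom_sr {m n : ℕ} (h : m ∣ n) (a : ZMod n) :
    castHom h (sr a) = sr a.cast := rfl

lemma pow_eq_pow_mod_six (x : DihedralGroup 3) (e : ℕ) : x ^ e = x ^ (e % 6) := by
  have h6 : Monoid.exponent (DihedralGroup 3) = 6 := by rw [exponent]; rfl
  rw [← h6]
  exact Monoid.pow_eq_mod_exponent x

set_option synthInstance.maxSize 1000 in
lemma three_wordXYY_wordYXY_strict_imp (c : ℕ) {x₀ y₀ : DihedralGroup 3}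
    (hx : x₀ ^ (c + 3) = r 1) (hy : y₀ ^ (c + 3) = sr 0) :
    ((∀ x y : DihedralGroup 3, wordXYY c x y = 1 → wordYXY c x y = 1) ∧
        wordYXY c x₀ y₀ = 1 ∧ wordXYY c x₀ y₀ ≠ 1) ∨
      ((∀ x y : DihedralGroup 3, wordYXY c x y = 1 → wordXYY c x y = 1) ∧
        wordXYY c x₀ y₀ = 1 ∧ wordYXY c x₀ y₀ ≠ 1) := by
  have hc : (c + 3) % 6 = (c % 6 + 3) % 6 := by omega
  rw [pow_eq_pow_mod_six, hc] at hx hy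
  simp only [wordXYY, wordYXY, pow_eq_pow_mod_six _ c]
  have hc6 : c % 6 < 6 := Nat.mod_lt _ (by norm_num)
  generalize c % 6 = e at hx hy hc6 ⊢
  revert x₀ y₀
  revert e
  decide

end DihedralGroup

/-- For `l ≥ 1` divisible by 3, the dihedral group `D_l` of order `2l` is unround:
it is not `k`-round for any `k ≥ 2`. -/
theorem statement14 (l : ℕ) (hl : 1 ≤ l) (h3 : 3 ∣ l) :
    ∀ k : ℕ, 2 ≤ k → ¬ IsKRound (DihedralGroup l) k := by
  rintro k hk ⟨g, hg⟩
  have : NeZero l := ⟨by omega⟩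
  obtain ⟨i₀, hi₀⟩ := hg.bijective_pow.surjective (r 1)
  obtain ⟨i₁, hi₁⟩ := hg.bijective_pow.surjective (sr 0)
  have hk2 : k ≠ 2 := by rintro rfl; exact sq_ne_sr _ _ hi₁
  obtain ⟨c, rfl⟩ : ∃ c, k = c + 3 := ⟨k - 3, by omega⟩
  set ψ := castHom h3
  have hx : ψ (g i₀) ^ (c + 3) = r 1 := by simp [← map_pow, hi₀, ψ, ZMod.cast_one h3]
  have hy : ψ (g i₁) ^ (c + 3) = sr 0 := by simp [← map_pow, hi₁, ψ]
  have hXYY := hg.bijective_wordXYY (i₁ - i₀)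
  have hYXY := hg.bijective_wordYXY (i₁ - i₀)
  rcases three_wordXYY_wordYXY_strict_imp c hx hy with
    ⟨hsub, hYXY₀, hXYY₀⟩ | ⟨hsub, hXYY₀, hYXY₀⟩
  · have h := hXYY.preimage_eq_of_preimage_subset hYXY (s := ψ.ker) fun i hi => by
      simpa using hsub _ _ (by simpa using hi)
    exact hXYY₀ (by simpa using (Set.ext_iff.mp h i₀).mpr (by simpa using hYXY₀))
  · have h := hYXY.preimage_eq_of_preimage_subset hXYY (s := ψ.ker) fun i hi => by
      simpa using hsub _ _ (by simpa using hi)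
    exact hYXY₀ (by simpa using (Set.ext_iff.mp h i₀).mpr (by simpa using hXYY₀))
end

section
/- Let G be a finite nilpotent group of odd order n. Then G admits a 1-1 cycle g of length n such that S^m(g) is a 1-1 cycle for every positive integer m, where S is the summation operator S(g)(i) = g(i)·g(i+1). -/
/-- The summation operator `S` on cycles of length `L` over `G`:
`S(g)(i) = g(i) * g(i+1)`. -/
def Sop {G : Type*} [Group G] {L : ℕ} (g : ZMod L → G) : ZMod L → G :=
  fun i => g i * g (i + 1)

/-!
Induction on `|G|`. A nontrivial nilpotent group has a nontrivial central element `z`, whose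
order `k` is odd. Let `ḡ` be a good cycle of length `m` for `G ⧸ ⟨z⟩` and lift it to the cycle
of length `m k` whose value at `i = q m + s` (`0 ≤ s < m`) is a preimage of `ḡ s` times `z ^ q`.
As `z` is central, `S^r` of the lift is a preimage of `S^r ḡ` (read modulo `m`) times a central
factor, and shifting the index by `m e` multiplies that factor by `z ^ (2 ^ r e)`. Hence two
indices with equal `S^r`-values agree modulo `m`, and then differ by `m e` with
`z ^ (2 ^ r e) = 1`; since `k` is odd, `k ∣ e`, so the indices coincide.
-/

open Function Subgroup
open scoped IsMulCommutative

section Sop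

variable {G H : Type*} [Group G] [Group H] {L : ℕ}

lemma Sop_iterate_map (φ : G →* H) (g : ZMod L → G) (r : ℕ) :
    Sop^[r] (φ ∘ g) = φ ∘ Sop^[r] g := by
  induction r generalizing g with
  | zero => rfl
  | succ r ih =>
    have : Sop (φ ∘ g) = φ ∘ Sop g := funext fun i => (map_mul φ _ _).symm
    rw [iterate_succ_apply, iterate_succ_apply, this, ih]

lemma Sop_iterate_comp {L' : ℕ} {σ : ZMod L → ZMod L'} (hσ : ∀ i, σ (i + 1) = σ i + 1)
    (g : ZMod L' → G) (r : ℕ) : Sop^[r] (g ∘ σ) = Sop^[r] g ∘ σ := by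
  induction r generalizing g with
  | zero => rfl
  | succ r ih =>
    have : Sop (g ∘ σ) = Sop g ∘ σ := funext fun i => by simp [Sop, hσ]
    rw [iterate_succ_apply, iterate_succ_apply, this, ih]

lemma Sop_iterate_mul_center (f : ZMod L → G) (w : ZMod L → center G) (r : ℕ) :
    Sop^[r] (fun i => f i * w i) = fun i => Sop^[r] f i * ↑(Sop^[r] w i) := by
  induction r generalizing f w with
  | zero => rfl
  | succ r ih =>
    have : Sop (fun i => f i * w i) = fun i => Sop f i * ↑(Sop w i) := funext fun i => by
      simp only [Sop, coe_mul, mul_assoc, ← mul_assoc (w i : G),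
        (mem_center_iff.mp (w i).2 (f (i + 1))).symm]
    simp only [iterate_succ_apply, this, ih]

lemma Sop_iterate_apply_add {C : Type*} [CommGroup C] {w : ZMod L → C} {a : ZMod L} {t : C}
    (hw : ∀ i, w (i + a) = w i * t) (r : ℕ) (i : ZMod L) :
    Sop^[r] w (i + a) = Sop^[r] w i * t ^ 2 ^ r := by
  induction r generalizing w t with
  | zero => simpa using hw i
  | succ r ih =>
    have hSw : ∀ i, Sop w (i + a) = Sop w i * t ^ 2 := fun i => by
      simp only [Sop]
      rw [add_right_comm, hw, hw, mul_mul_mul_comm, sq]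
    rw [iterate_succ_apply, ih hSw, ← pow_mul, pow_succ']

end Sop

lemma Subgroup.normal_of_le_center {G : Type*} [Group G] {H : Subgroup G} (h : H ≤ center G) :
    H.Normal :=
  ⟨fun a ha g => by rwa [mem_center_iff.mp (h ha) g, mul_inv_cancel_right]⟩

lemma pow_val_add_natCast_mul_div {M : Type*} [Monoid M] {t : M} {k : ℕ} (ht : t ^ k = 1)
    {m : ℕ} (hm : 0 < m) [NeZero (m * k)] (i : ZMod (m * k)) (e : ℕ) :
    t ^ ((i + ((m * e : ℕ) : ZMod (m * k))).val / m) = t ^ (i.val / m) * t ^ e := by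
  rw [ZMod.val_add, ZMod.val_natCast, Nat.add_mod_mod, Nat.mod_mul_right_div_self,
    ← pow_eq_pow_mod _ ht, Nat.add_mul_div_left _ _ hm, pow_add]

lemma exists_eq_add_natCast_mul_of_castHom_eq {m k : ℕ} [NeZero (m * k)] {i i' : ZMod (m * k)}
    (h : ZMod.castHom (dvd_mul_right m k) (ZMod m) i = ZMod.castHom (dvd_mul_right m k) _ i') :
    ∃ e : ℕ, i' = i + ((m * e : ℕ) : ZMod (m * k)) := by
  have hdiff : ZMod.castHom (dvd_mul_right m k) (ZMod m) (i' - i) = 0 := by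
    rw [map_sub, h, sub_self]
  rw [ZMod.castHom_apply, ZMod.cast_eq_val, ZMod.natCast_eq_zero_iff] at hdiff
  obtain ⟨e, he⟩ := hdiff
  exact ⟨e, by rw [← he, ZMod.natCast_zmod_val, add_sub_cancel]⟩

section LiftCycle

variable {G : Type*} [Group G] (z : center G) {m : ℕ} (k : ℕ)
  (gbar : ZMod m → G ⧸ zpowers (z : G))

noncomputable def liftCycle : ZMod (m * k) → G :=
  fun i => (gbar (ZMod.castHom (dvd_mul_right m k) _ i)).out * ↑(z ^ (i.val / m))

lemma castHom_add_one (i : ZMod (m * k)) :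
    ZMod.castHom (dvd_mul_right m k) (ZMod m) (i + 1) =
      ZMod.castHom (dvd_mul_right m k) _ i + 1 := by
  rw [map_add, map_one]

lemma mk_Sop_iterate_liftCycle [(zpowers (z : G)).Normal] (r : ℕ) (i : ZMod (m * k)) :
    ((Sop^[r] (liftCycle z k gbar) i : G) : G ⧸ zpowers (z : G)) =
      Sop^[r] gbar (ZMod.castHom (dvd_mul_right m k) _ i) := by
  have hmk :
      QuotientGroup.mk' _ ∘ liftCycle z k gbar = gbar ∘ ZMod.castHom (dvd_mul_right m k) _ :=
    funext fun i => by simp [liftCycle, pow_mem, mem_zpowers]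
  change (QuotientGroup.mk' _ ∘ Sop^[r] (liftCycle z k gbar)) i = _
  rw [← Sop_iterate_map, hmk, Sop_iterate_comp (castHom_add_one k), comp_apply]

lemma Sop_iterate_liftCycle_add [NeZero m] [NeZero (m * k)] (hzk : z ^ k = 1) (r : ℕ)
    (i : ZMod (m * k)) (e : ℕ) :
    Sop^[r] (liftCycle z k gbar) (i + ((m * e : ℕ) : ZMod (m * k))) =
      Sop^[r] (liftCycle z k gbar) i * ↑((z ^ e) ^ 2 ^ r) := by
  have hρ : ZMod.castHom (dvd_mul_right m k) (ZMod m) ((m * e : ℕ) : ZMod (m * k)) = 0 := by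
    rw [map_natCast, ZMod.natCast_eq_zero_iff]
    exact dvd_mul_right m e
  have hw (j : ZMod (m * k)) : z ^ ((j + ((m * e : ℕ) : ZMod (m * k))).val / m) =
      z ^ (j.val / m) * z ^ e :=
    pow_val_add_natCast_mul_div hzk (NeZero.pos m) j e
  have : liftCycle z k gbar = fun i =>
      ((fun j => (gbar j).out) ∘ ZMod.castHom (dvd_mul_right m k) _) i * ↑(z ^ (i.val / m)) :=
    rfl
  rw [this, Sop_iterate_mul_center, Sop_iterate_comp (castHom_add_one k)]
  simp only [comp_apply]
  rw [map_add, hρ, add_zero, Sop_iterate_apply_add hw, coe_mul, mul_assoc]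

end LiftCycle

theorem exists_injective_Sop_iterate_of_quotient_zpowers {G : Type*} [Group G] (z : center G)
    [(zpowers (z : G)).Normal] (hodd : Odd (orderOf z)) {m : ℕ} [NeZero m]
    (gbar : ZMod m → G ⧸ zpowers (z : G)) (hgbar : ∀ r, Injective (Sop^[r] gbar)) :
    ∃ g : ZMod (m * orderOf z) → G, ∀ r, Injective (Sop^[r] g) := by
  have : NeZero (m * orderOf z) := ⟨(mul_pos (NeZero.pos m) hodd.pos).ne'⟩
  refine ⟨liftCycle z _ gbar, fun r i i' hii' => ?_⟩
  have hρ : ZMod.castHom (dvd_mul_right m _) (ZMod m) i = ZMod.castHom (dvd_mul_right m _) _ i' :=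
    hgbar r <| by rw [← mk_Sop_iterate_liftCycle, ← mk_Sop_iterate_liftCycle, hii']
  obtain ⟨e, rfl⟩ := exists_eq_add_natCast_mul_of_castHom_eq hρ
  rw [Sop_iterate_liftCycle_add z _ gbar (pow_orderOf_eq_one z), left_eq_mul,
    OneMemClass.coe_eq_one, ← pow_mul, ← orderOf_dvd_iff_pow_eq_one] at hii'
  have hke : orderOf z ∣ e :=
    (Nat.Coprime.pow_right r (Nat.coprime_two_right.mpr hodd)).dvd_of_dvd_mul_right hii'
  rw [(ZMod.natCast_eq_zero_iff _ _).mpr (mul_dvd_mul_left m hke), add_zero]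

theorem exists_injective_Sop_iterate_of_isNilpotent {G : Type*} [Group G] [Finite G]
    [Group.IsNilpotent G] (hodd : Odd (Nat.card G)) :
    ∃ g : ZMod (Nat.card G) → G, ∀ r, Injective (Sop^[r] g) := by
  induction hn : Nat.card G using Nat.strong_induction_on generalizing G with
  | _ n ih =>
  rcases subsingleton_or_nontrivial G with hG | hG
  · have : n = 1 := by
      have := Finite.card_le_one_iff_subsingleton.mpr hG
      have := hodd.pos
      omega
    subst this
    exact ⟨fun _ => 1, fun r => injective_of_subsingleton _⟩
  subst hn
  obtain ⟨z, hz1⟩ := ne_bot_iff_exists_ne_one.mp (Group.IsNilpotent.center_ne_bot G)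
  have : (zpowers (z : G)).Normal := normal_of_le_center (zpowers_le.mpr z.2)
  have hcard : Nat.card G = Nat.card (G ⧸ zpowers (z : G)) * orderOf z := by
    rw [card_eq_card_quotient_mul_card_subgroup, Nat.card_zpowers, orderOf_coe]
  have hkodd : Odd (orderOf z) := hodd.of_dvd_nat (orderOf_coe z ▸ orderOf_dvd_natCard (z : G))
  have hk : 1 < orderOf z :=
    Nat.one_lt_iff_ne_zero_and_ne_one.mpr ⟨hkodd.pos.ne', orderOf_eq_one_iff.not.mpr hz1⟩
  obtain ⟨gbar, hgbar⟩ := ih (Nat.card (G ⧸ zpowers (z : G)))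
    (hcard ▸ lt_mul_of_one_lt_right Nat.card_pos hk) (hodd.of_dvd_nat (Dvd.intro _ hcard.symm)) rfl
  rw [hcard]
  exact exists_injective_Sop_iterate_of_quotient_zpowers z hkodd gbar hgbar

/-- A finite nilpotent group of odd order `n` admits a 1-1 cycle `g` of length `n`
such that `S^m(g)` is a 1-1 cycle for every positive integer `m`. -/
theorem statement16 (G : Type*) [Group G] [Finite G] (hnil : Group.IsNilpotent G)
    (hodd : Odd (Nat.card G)) :
    ∃ g : ZMod (Nat.card G) → G, Function.Bijective g ∧
      ∀ m : ℕ, 0 < m → Function.Bijective (Sop^[m] g) := by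
  obtain ⟨g, hg⟩ := exists_injective_Sop_iterate_of_isNilpotent hodd
  have hbij (r : ℕ) : Bijective (Sop^[r] g) :=
    (hg r).bijective_of_nat_card_le (Nat.card_zmod _).ge
  exact ⟨g, hbij 0, fun m _ => hbij m⟩
end
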